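/- For a vector field X on M_n with X_i = g_{ih} X^h, the covariant derivative with respect to the Levi-Civita connection ^S∇ of the synectic metric of the associated covector field of the vertical lift ^V X has components ^S∇_j (^V X)_i = ∇_j X_i and all other components zero; the covariant derivative of the associated covector field of the complete lift ^C X has components ^S∇_j (^C X)_i = y^s ∂_s(∇_j X_i) + ∇_j(a_{il} X^l) − H^m_{ji} X_m, ^S∇_j (^C X)_{ī} = ^S∇_{j̄} (^C X)_i = ∇_j X_i, and ^S∇_{j̄} (^C X)_{ī} = 0. -/

import Mathlib

open scoped BigOperators

noncomputable section

namespace Synectic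

variable {n : ℕ}

/-- Partial derivative `∂_j f` of a real-valued function on `ℝⁿ` (global chart of `M_n`). -/
def pd (f : (Fin n → ℝ) → ℝ) (j : Fin n) (x : Fin n → ℝ) : ℝ :=
  fderiv ℝ f x (Pi.single j 1)

/-- Christoffel symbols `Γ^h_{ji}` of the metric `g` with inverse `ginv`. -/
def Christoffel (g ginv : (Fin n → ℝ) → Fin n → Fin n → ℝ) (h j i : Fin n)
    (x : Fin n → ℝ) : ℝ :=
  (1 / 2) * ∑ s, ginv x h s *
    (pd (fun z => g z s i) j x + pd (fun z => g z j s) i x - pd (fun z => g z j i) s x)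

/-- Covariant derivative `∇_j X^h` of a vector field. -/
def covVec (g ginv : (Fin n → ℝ) → Fin n → Fin n → ℝ)
    (X : (Fin n → ℝ) → Fin n → ℝ) (j h : Fin n) (x : Fin n → ℝ) : ℝ :=
  pd (fun z => X z h) j x + ∑ i, Christoffel g ginv h j i x * X x i

/-- Covariant derivative `∇_j ω_i` of a covector field. -/
def covCov (g ginv : (Fin n → ℝ) → Fin n → Fin n → ℝ)
    (ω : (Fin n → ℝ) → Fin n → ℝ) (j i : Fin n) (x : Fin n → ℝ) : ℝ :=
  pd (fun z => ω z i) j x - ∑ k, Christoffel g ginv k j i x * ω x k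

/-- Covariant derivative `∇_s a_{ji}` of a `(0,2)`-tensor field. -/
def cov2 (g ginv : (Fin n → ℝ) → Fin n → Fin n → ℝ)
    (a : (Fin n → ℝ) → Fin n → Fin n → ℝ) (s j i : Fin n) (x : Fin n → ℝ) : ℝ :=
  pd (fun z => a z j i) s x - ∑ l, Christoffel g ginv l s j x * a x l i
    - ∑ l, Christoffel g ginv l s i x * a x j l

/-- The tensor `H^h_{ji} = (1/2) g^{hs} (∇_j a_{si} + ∇_i a_{js} - ∇_s a_{ji})`. -/
def Hcoef (g ginv a : (Fin n → ℝ) → Fin n → Fin n → ℝ) (h j i : Fin n)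
    (x : Fin n → ℝ) : ℝ :=
  (1 / 2) * ∑ s, ginv x h s *
    (cov2 g ginv a j s i x + cov2 g ginv a i j s x - cov2 g ginv a s j i x)

/-- Components `R_{kji}{}^h` of the Riemann curvature tensor of `g`. -/
def Riem (g ginv : (Fin n → ℝ) → Fin n → Fin n → ℝ) (k j i h : Fin n)
    (x : Fin n → ℝ) : ℝ :=
  pd (fun z => Christoffel g ginv h j i z) k x - pd (fun z => Christoffel g ginv h k i z) j x
    + ∑ m, Christoffel g ginv m j i x * Christoffel g ginv h k m x
    - ∑ m, Christoffel g ginv m k i x * Christoffel g ginv h j m x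

/-- The covector field `X_i = g_{ih} X^h` associated with a vector field `X`. -/
def lower (g : (Fin n → ℝ) → Fin n → Fin n → ℝ) (X : (Fin n → ℝ) → Fin n → ℝ)
    (x : Fin n → ℝ) (i : Fin n) : ℝ :=
  ∑ h, g x i h * X x h

/-- A point of the tangent bundle `T(M_n)` in induced coordinates `(xʰ, yʰ)`. -/
abbrev TPt (n : ℕ) := (Fin n → ℝ) × (Fin n → ℝ)

/-- Index type for induced coordinates on `T(M_n)`: `inl` = base indices, `inr` = fibre indices. -/
abbrev Idx (n : ℕ) := Fin n ⊕ Fin n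

/-- Coordinate directions on `T(M_n)`. -/
def eIdx : Idx n → TPt n
  | Sum.inl j => (Pi.single j 1, 0)
  | Sum.inr j => (0, Pi.single j 1)

/-- Partial derivative `∂_A f` on `T(M_n)` (`∂_j` for `A = inl j`, `∂_{j̄}` for `A = inr j`). -/
def pdT (f : TPt n → ℝ) (A : Idx n) (p : TPt n) : ℝ :=
  fderiv ℝ f p (eIdx A)

/-- Covariant components of the synectic metric `^S g = ^C g + ^V a` on `T(M_n)`. -/
def synMetric (g a : (Fin n → ℝ) → Fin n → Fin n → ℝ) (p : TPt n) :
    Idx n → Idx n → ℝ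
  | Sum.inl j, Sum.inl i => a p.1 j i + ∑ s, p.2 s * pd (fun z => g z j i) s p.1
  | Sum.inl j, Sum.inr i => g p.1 j i
  | Sum.inr j, Sum.inl i => g p.1 j i
  | Sum.inr _, Sum.inr _ => 0

/-- Contravariant components of the synectic metric. -/
def synMetricInv (ginv a : (Fin n → ℝ) → Fin n → Fin n → ℝ) (p : TPt n) :
    Idx n → Idx n → ℝ
  | Sum.inl _, Sum.inl _ => 0
  | Sum.inl j, Sum.inr i => ginv p.1 j i
  | Sum.inr j, Sum.inl i => ginv p.1 j i
  | Sum.inr j, Sum.inr i =>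
      ∑ s, p.2 s * pd (fun z => ginv z j i) s p.1
        - ∑ t, ∑ s, ginv p.1 j t * a p.1 t s * ginv p.1 s i

/-- Vertical lift `^V X` of a vector field, with components `(0, Xʰ)`. -/
def vlift (X : (Fin n → ℝ) → Fin n → ℝ) (p : TPt n) : Idx n → ℝ
  | Sum.inl _ => 0
  | Sum.inr h => X p.1 h

/-- Complete lift `^C X` of a vector field, with components `(Xʰ, yˢ ∂_s Xʰ)`. -/
def clift (X : (Fin n → ℝ) → Fin n → ℝ) (p : TPt n) : Idx n → ℝ
  | Sum.inl h => X p.1 h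
  | Sum.inr h => ∑ s, p.2 s * pd (fun z => X z h) s p.1

/-- Horizontal lift `^H X` of a vector field, with components `(Xʰ, -yˢ Γʰ_{si} Xⁱ)`. -/
def hlift (g ginv : (Fin n → ℝ) → Fin n → Fin n → ℝ)
    (X : (Fin n → ℝ) → Fin n → ℝ) (p : TPt n) : Idx n → ℝ
  | Sum.inl h => X p.1 h
  | Sum.inr h => -∑ s, ∑ i, p.2 s * Christoffel g ginv h s i p.1 * X p.1 i

/-- Components of the Lie derivative `(𝓛_V G)_{AB}` of a metric `G` on `T(M_n)` along `V`. -/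
def lieDerivT (G : TPt n → Idx n → Idx n → ℝ) (V : TPt n → Idx n → ℝ)
    (A B : Idx n) (p : TPt n) : ℝ :=
  ∑ C, (V p C * pdT (fun q => G q A B) C p
      + G p A C * pdT (fun q => V q C) B p
      + G p C B * pdT (fun q => V q C) A p)

/-- `V` is a Killing vector field of the metric `G` on `T(M_n)`. -/
def IsKillingT (G : TPt n → Idx n → Idx n → ℝ) (V : TPt n → Idx n → ℝ) : Prop :=
  ∀ p A B, lieDerivT G V A B p = 0

/-- Christoffel symbols of a metric `G` (with inverse `Ginv`) on `T(M_n)`. -/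
def ChristoffelT (G Ginv : TPt n → Idx n → Idx n → ℝ) (A B C : Idx n) (p : TPt n) : ℝ :=
  (1 / 2) * ∑ D, Ginv p A D *
    (pdT (fun q => G q D C) B p + pdT (fun q => G q B D) C p - pdT (fun q => G q B C) D p)

/-- Covariant derivative `∇_B ω_A` on `T(M_n)` of a covector field w.r.t. the
Levi-Civita connection of `(G, Ginv)`. -/
def covCovT (G Ginv : TPt n → Idx n → Idx n → ℝ) (ω : TPt n → Idx n → ℝ)
    (B A : Idx n) (p : TPt n) : ℝ :=
  pdT (fun q => ω q A) B p - ∑ C, ChristoffelT G Ginv C B A p * ω p C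

/-- Covariant derivative `∇_B V^A` on `T(M_n)` of a vector field w.r.t. a linear
connection given by its components `Conn^A_{BC}`. -/
def covVecT (Conn : Idx n → Idx n → Idx n → TPt n → ℝ) (V : TPt n → Idx n → ℝ)
    (B A : Idx n) (p : TPt n) : ℝ :=
  pdT (fun q => V q A) B p + ∑ C, Conn A B C p * V p C

/-- Components `Γ̃^A_{BC}` of the metric connection `∇̃` of the synectic metric. -/
def GammaTilde (g ginv a : (Fin n → ℝ) → Fin n → Fin n → ℝ) :
    Idx n → Idx n → Idx n → TPt n → ℝ
  | Sum.inl h, Sum.inl j, Sum.inl i => fun p => Christoffel g ginv h j i p.1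
  | Sum.inr h, Sum.inr j, Sum.inl i => fun p => Christoffel g ginv h j i p.1
  | Sum.inr h, Sum.inl j, Sum.inr i => fun p => Christoffel g ginv h j i p.1
  | Sum.inr h, Sum.inl j, Sum.inl i => fun p =>
      (∑ t, p.2 t * pd (fun z => Christoffel g ginv h j i z) t p.1)
        + Hcoef g ginv a h j i p.1 - ∑ k, p.2 k * Riem g ginv k j i h p.1
  | _, _, _ => fun _ => 0

/-- Components `Γ̄^A_{BC}` of the metric connection `∇̄` of the complete lift metric `^C g`
(the horizontal lift `^H ∇` of the Levi-Civita connection of `g`). -/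
def GammaBar (g ginv : (Fin n → ℝ) → Fin n → Fin n → ℝ) :
    Idx n → Idx n → Idx n → TPt n → ℝ
  | Sum.inl h, Sum.inl j, Sum.inl i => fun p => Christoffel g ginv h j i p.1
  | Sum.inr h, Sum.inr j, Sum.inl i => fun p => Christoffel g ginv h j i p.1
  | Sum.inr h, Sum.inl j, Sum.inr i => fun p => Christoffel g ginv h j i p.1
  | Sum.inr h, Sum.inl j, Sum.inl i => fun p =>
      (∑ t, p.2 t * pd (fun z => Christoffel g ginv h j i z) t p.1)
        - ∑ k, p.2 k * Riem g ginv k j i h p.1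
  | _, _, _ => fun _ => 0

/-- Vertical lift `^V H` of the `(1,2)`-tensor field `H`, as a difference of connections. -/
def vertH (g ginv a : (Fin n → ℝ) → Fin n → Fin n → ℝ) :
    Idx n → Idx n → Idx n → TPt n → ℝ
  | Sum.inr h, Sum.inl j, Sum.inl i => fun p => Hcoef g ginv a h j i p.1
  | _, _, _ => fun _ => 0

/-- Covector field associated with a vector field `V` on `(T(M_n), ^S g)`. -/
def assocCov (g a : (Fin n → ℝ) → Fin n → Fin n → ℝ) (V : TPt n → Idx n → ℝ)
    (p : TPt n) (C : Idx n) : ℝ :=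
  ∑ A, synMetric g a p C A * V p A

/-- The vertical vector field `ιC` with components `(0, yⁱ C_iᵏ)`. -/
def iotaT (C : (Fin n → ℝ) → Fin n → Fin n → ℝ) (p : TPt n) : Idx n → ℝ
  | Sum.inl _ => 0
  | Sum.inr k => ∑ i, p.2 i * C p.1 i k

/-- `X` is a Killing vector field of `(M_n, g)`: `∇_j X_i + ∇_i X_j = 0`. -/
def IsKillingBase (g ginv : (Fin n → ℝ) → Fin n → Fin n → ℝ)
    (X : (Fin n → ℝ) → Fin n → ℝ) : Prop :=
  ∀ x j i, covCov g ginv (lower g X) j i x + covCov g ginv (lower g X) i j x = 0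

/-- `V` is a harmonic vector field of `(T(M_n), ^S g)`: its associated covector field is
closed and coclosed w.r.t. the Levi-Civita connection of the synectic metric. -/
def IsHarmonicT (g ginv a : (Fin n → ℝ) → Fin n → Fin n → ℝ)
    (V : TPt n → Idx n → ℝ) : Prop :=
  (∀ p B A, covCovT (synMetric g a) (synMetricInv ginv a) (assocCov g a V) B A p
      - covCovT (synMetric g a) (synMetricInv ginv a) (assocCov g a V) A B p = 0)
  ∧ (∀ p, ∑ B, ∑ A, synMetricInv ginv a p B A *
      covCovT (synMetric g a) (synMetricInv ginv a) (assocCov g a V) B A p = 0)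

/-- `X` is a harmonic vector field of `(M_n, g)`: its associated `1`-form is closed and
coclosed. -/
def IsHarmonicBase (g ginv : (Fin n → ℝ) → Fin n → Fin n → ℝ)
    (X : (Fin n → ℝ) → Fin n → ℝ) : Prop :=
  (∀ x j i, covCov g ginv (lower g X) j i x - covCov g ginv (lower g X) i j x = 0)
  ∧ (∀ x, ∑ j, ∑ i, ginv x j i * covCov g ginv (lower g X) j i x = 0)

/-- A vector field on `T(M_n)` is parallel w.r.t. a linear connection `Conn` if its covariant
derivative vanishes identically. -/
def IsParallelT (Conn : Idx n → Idx n → Idx n → TPt n → ℝ) (V : TPt n → Idx n → ℝ) : Prop :=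
  ∀ p B A, covVecT Conn V B A p = 0

/-- `X` is parallel on `M_n`: `∇_j Xʰ = 0`. -/
def IsParallelBase (g ginv : (Fin n → ℝ) → Fin n → Fin n → ℝ)
    (X : (Fin n → ℝ) → Fin n → ℝ) : Prop :=
  ∀ x j h, covVec g ginv X j h x = 0


section Aux

/-- smooth real function on a normed space -/
def Sm {E : Type*} [NormedAddCommGroup E] [NormedSpace ℝ E] (f : E → ℝ) : Prop :=
  ContDiff ℝ (⊤ : ℕ∞) f

namespace Sm
variable {E : Type*} [NormedAddCommGroup E] [NormedSpace ℝ E] {f g : E → ℝ}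

theorem diff (hf : Sm f) : Differentiable ℝ f := hf.differentiable (by simp)
theorem diffAt (hf : Sm f) {x : E} : DifferentiableAt ℝ f x := hf.diff x
theorem const (c : ℝ) : Sm (fun _ : E => c) := contDiff_const
theorem add (hf : Sm f) (hg : Sm g) : Sm (fun x => f x + g x) := ContDiff.add hf hg
theorem sub (hf : Sm f) (hg : Sm g) : Sm (fun x => f x - g x) := ContDiff.sub hf hg
theorem mul (hf : Sm f) (hg : Sm g) : Sm (fun x => f x * g x) := ContDiff.mul hf hg
theorem neg (hf : Sm f) : Sm (fun x => -f x) := ContDiff.neg hf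
theorem sum {ι : Type*} {s : Finset ι} {F : ι → E → ℝ} (h : ∀ i ∈ s, Sm (F i)) :
    Sm (fun x => ∑ i ∈ s, F i x) := ContDiff.sum h
theorem pd {f : (Fin n → ℝ) → ℝ} (hf : Sm f) (j : Fin n) : Sm (pd f j) :=
  (hf.fderiv_right (by simp)).clm_apply contDiff_const
theorem fst {F : (Fin n → ℝ) → ℝ} (hF : Sm F) : Sm (fun p : TPt n => F p.1) :=
  hF.comp contDiff_fst
theorem snd_apply (s : Fin n) : Sm (fun p : TPt n => p.2 s) :=
  (contDiff_pi.mp contDiff_snd) s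

end Sm

section pdlemmas
variable {E : Type*} [NormedAddCommGroup E] [NormedSpace ℝ E]

-- generic directional derivative lemmas
theorem fd_add {f g : E → ℝ} (hf : Sm f) (hg : Sm g) (x v : E) :
    fderiv ℝ (fun y => f y + g y) x v = fderiv ℝ f x v + fderiv ℝ g x v := by
  rw [fderiv_fun_add hf.diffAt hg.diffAt]; rfl
theorem fd_sub {f g : E → ℝ} (hf : Sm f) (hg : Sm g) (x v : E) :
    fderiv ℝ (fun y => f y - g y) x v = fderiv ℝ f x v - fderiv ℝ g x v := by
  rw [fderiv_fun_sub hf.diffAt hg.diffAt]; rfl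
theorem fd_mul {f g : E → ℝ} (hf : Sm f) (hg : Sm g) (x v : E) :
    fderiv ℝ (fun y => f y * g y) x v = fderiv ℝ f x v * g x + f x * fderiv ℝ g x v := by
  rw [fderiv_fun_mul hf.diffAt hg.diffAt]; simp; ring
theorem fd_const (c : ℝ) (x v : E) : fderiv ℝ (fun _ : E => c) x v = 0 := by
  simp
theorem fd_const_mul {f : E → ℝ} (hf : Sm f) (c : ℝ) (x v : E) :
    fderiv ℝ (fun y => c * f y) x v = c * fderiv ℝ f x v := by
  rw [fderiv_const_mul hf.diffAt]; rfl
theorem fd_sum {ι : Type*} {s : Finset ι} {F : ι → E → ℝ} (h : ∀ i ∈ s, Sm (F i)) (x v : E) :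
    fderiv ℝ (fun y => ∑ i ∈ s, F i y) x v = ∑ i ∈ s, fderiv ℝ (F i) x v := by
  rw [fderiv_fun_sum (fun i hi => (h i hi).diffAt)]
  simp

end pdlemmas

-- specializations to pd
theorem pd_add {f g : (Fin n → ℝ) → ℝ} (hf : Sm f) (hg : Sm g) (j : Fin n) (x : Fin n → ℝ) :
    pd (fun y => f y + g y) j x = pd f j x + pd g j x := fd_add hf hg x _
theorem pd_sub {f g : (Fin n → ℝ) → ℝ} (hf : Sm f) (hg : Sm g) (j : Fin n) (x : Fin n → ℝ) :
    pd (fun y => f y - g y) j x = pd f j x - pd g j x := fd_sub hf hg x _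
theorem pd_mul {f g : (Fin n → ℝ) → ℝ} (hf : Sm f) (hg : Sm g) (j : Fin n) (x : Fin n → ℝ) :
    pd (fun y => f y * g y) j x = pd f j x * g x + f x * pd g j x := fd_mul hf hg x _
theorem pd_const_mul {f : (Fin n → ℝ) → ℝ} (hf : Sm f) (c : ℝ) (j : Fin n) (x : Fin n → ℝ) :
    pd (fun y => c * f y) j x = c * pd f j x := fd_const_mul hf c x _
theorem pd_sum {ι : Type*} {s : Finset ι} {F : ι → (Fin n → ℝ) → ℝ} (h : ∀ i ∈ s, Sm (F i))
    (j : Fin n) (x : Fin n → ℝ) :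
    pd (fun y => ∑ i ∈ s, F i y) j x = ∑ i ∈ s, pd (F i) j x := fd_sum h x _

/-- Schwarz symmetry of second partials. -/
theorem pd_swap {f : (Fin n → ℝ) → ℝ} (hf : Sm f) (i j : Fin n) (x : Fin n → ℝ) :
    pd (pd f i) j x = pd (pd f j) i x := by
  have hd : DifferentiableAt ℝ (fderiv ℝ f) x :=
    ((hf.fderiv_right (m := (⊤ : ℕ∞)) (by simp)).differentiable (by simp)) x
  have key : ∀ v w : Fin n → ℝ,
      fderiv ℝ (fun z => fderiv ℝ f z v) x w = fderiv ℝ (fderiv ℝ f) x w v := by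
    intro v w
    rw [fderiv_clm_apply hd (differentiableAt_const v)]
    simp
  have hsymm := (hf.contDiffAt (x := x)).isSymmSndFDerivAt (by rw [minSmoothness_of_isRCLikeNormedField]; show ((2:ℕ∞) : WithTop ℕ∞) ≤ ((⊤:ℕ∞) : WithTop ℕ∞); exact WithTop.coe_le_coe.mpr le_top)
  unfold pd
  rw [key, key, hsymm.eq]

-- pdT lemmas
theorem pdT_add {f g : TPt n → ℝ} (hf : Sm f) (hg : Sm g) (A : Idx n) (p : TPt n) :
    pdT (fun y => f y + g y) A p = pdT f A p + pdT g A p := fd_add hf hg p _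
theorem pdT_mul {f g : TPt n → ℝ} (hf : Sm f) (hg : Sm g) (A : Idx n) (p : TPt n) :
    pdT (fun y => f y * g y) A p = pdT f A p * g p + f p * pdT g A p := fd_mul hf hg p _
theorem pdT_const (c : ℝ) (A : Idx n) (p : TPt n) : pdT (fun _ => c) A p = 0 := fd_const c p _
theorem pdT_sum {ι : Type*} {s : Finset ι} {F : ι → TPt n → ℝ} (h : ∀ i ∈ s, Sm (F i))
    (A : Idx n) (p : TPt n) :
    pdT (fun y => ∑ i ∈ s, F i y) A p = ∑ i ∈ s, pdT (F i) A p := fd_sum h p _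

/-- base function along fst, base direction -/
theorem pdT_fst_inl {F : (Fin n → ℝ) → ℝ} (hF : Sm F) (j : Fin n) (p : TPt n) :
    pdT (fun q : TPt n => F q.1) (Sum.inl j) p = pd F j p.1 := by
  unfold pdT pd
  have : fderiv ℝ (fun q : TPt n => F q.1) p =
      (fderiv ℝ F p.1).comp (ContinuousLinearMap.fst ℝ (Fin n → ℝ) (Fin n → ℝ)) :=
    (hF.diffAt.hasFDerivAt.comp p (hasFDerivAt_fst)).fderiv
  rw [this]; rfl
theorem pdT_fst_inr {F : (Fin n → ℝ) → ℝ} (hF : Sm F) (j : Fin n) (p : TPt n) :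
    pdT (fun q : TPt n => F q.1) (Sum.inr j) p = 0 := by
  unfold pdT
  have : fderiv ℝ (fun q : TPt n => F q.1) p =
      (fderiv ℝ F p.1).comp (ContinuousLinearMap.fst ℝ (Fin n → ℝ) (Fin n → ℝ)) :=
    (hF.diffAt.hasFDerivAt.comp p (hasFDerivAt_fst)).fderiv
  rw [this]
  show fderiv ℝ F p.1 ((0, Pi.single j 1) : TPt n).1 = 0
  simp
theorem fderiv_snd_apply (s : Fin n) (p : TPt n) :
    fderiv ℝ (fun q : TPt n => q.2 s) p =
      (ContinuousLinearMap.proj s (R := ℝ) (φ := fun _ : Fin n => ℝ)).comp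
        (ContinuousLinearMap.snd ℝ (Fin n → ℝ) (Fin n → ℝ)) :=
  (((ContinuousLinearMap.proj s (R := ℝ) (φ := fun _ : Fin n => ℝ)).comp
        (ContinuousLinearMap.snd ℝ (Fin n → ℝ) (Fin n → ℝ))).hasFDerivAt (x := p)).fderiv

theorem pdT_snd_inl (s j : Fin n) (p : TPt n) :
    pdT (fun q : TPt n => q.2 s) (Sum.inl j) p = 0 := by
  unfold pdT
  rw [fderiv_snd_apply]
  show (((Pi.single j 1, (0 : Fin n → ℝ)) : TPt n).2 : Fin n → ℝ) s = 0
  rfl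
theorem pdT_snd_inr (s j : Fin n) (p : TPt n) :
    pdT (fun q : TPt n => q.2 s) (Sum.inr j) p = if s = j then (1:ℝ) else 0 := by
  unfold pdT
  rw [fderiv_snd_apply]
  show ((((0 : Fin n → ℝ), Pi.single j (1:ℝ)) : TPt n).2 : Fin n → ℝ) s = _
  simp [Pi.single_apply]


section Chunk2
variable {n : ℕ} (g ginv a : (Fin n → ℝ) → Fin n → Fin n → ℝ)
variable (X : (Fin n → ℝ) → Fin n → ℝ)

theorem pdT_ymul_inl {F : Fin n → (Fin n → ℝ) → ℝ} (hF : ∀ s, Sm (F s)) (k : Fin n) (p : TPt n) :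
    pdT (fun q : TPt n => ∑ s, q.2 s * F s q.1) (Sum.inl k) p
      = ∑ s, p.2 s * pd (F s) k p.1 := by
  rw [pdT_sum (fun s _ => (Sm.snd_apply s).mul ((hF s).fst))]
  refine Finset.sum_congr rfl fun s _ => ?_
  have h1 := pdT_mul (Sm.snd_apply s) ((hF s).fst) (Sum.inl k) p
  have h2 := pdT_snd_inl s k p
  have h3 := pdT_fst_inl (hF s) k p
  calc pdT (fun q : TPt n => q.2 s * F s q.1) (Sum.inl k) p
      = pdT (fun q : TPt n => q.2 s) (Sum.inl k) p * F s p.1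
        + p.2 s * pdT (fun q : TPt n => F s q.1) (Sum.inl k) p := h1
    _ = 0 * F s p.1 + p.2 s * pd (F s) k p.1 := by rw [h2, h3]
    _ = p.2 s * pd (F s) k p.1 := by ring

theorem pdT_ymul_inr {F : Fin n → (Fin n → ℝ) → ℝ} (hF : ∀ s, Sm (F s)) (k : Fin n) (p : TPt n) :
    pdT (fun q : TPt n => ∑ s, q.2 s * F s q.1) (Sum.inr k) p = F k p.1 := by
  rw [pdT_sum (fun s _ => (Sm.snd_apply s).mul ((hF s).fst))]
  have : ∀ s : Fin n, pdT (fun q : TPt n => q.2 s * F s q.1) (Sum.inr k) p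
      = (if s = k then (1:ℝ) else 0) * F s p.1 := by
    intro s
    calc pdT (fun q : TPt n => q.2 s * F s q.1) (Sum.inr k) p
        = pdT (fun q : TPt n => q.2 s) (Sum.inr k) p * F s p.1
          + p.2 s * pdT (fun q : TPt n => F s q.1) (Sum.inr k) p :=
          pdT_mul (Sm.snd_apply s) ((hF s).fst) (Sum.inr k) p
      _ = (if s = k then (1:ℝ) else 0) * F s p.1 + p.2 s * 0 := by
          rw [pdT_snd_inr, pdT_fst_inr (hF s)]
      _ = (if s = k then (1:ℝ) else 0) * F s p.1 := by ring
  simp only [this, ite_mul, one_mul, zero_mul]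
  simp

-- pdT of synMetric entries
theorem pdT_Gll_inl (hg : ∀ j i, Sm (fun z => g z j i)) (ha : ∀ j i, Sm (fun z => a z j i))
    (j i k : Fin n) (p : TPt n) :
    pdT (fun q => synMetric g a q (Sum.inl j) (Sum.inl i)) (Sum.inl k) p
      = pd (fun z => a z j i) k p.1
        + ∑ s, p.2 s * pd (pd (fun z => g z j i) s) k p.1 := by
  have h1 := pdT_add (f := fun q : TPt n => a q.1 j i)
    (g := fun q : TPt n => ∑ s, q.2 s * pd (fun z => g z j i) s q.1)
    ((ha j i).fst) (Sm.sum fun s _ => (Sm.snd_apply s).mul (((hg j i).pd s).fst)) (Sum.inl k) p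
  have h2 := pdT_fst_inl (ha j i) k p
  have h3 := pdT_ymul_inl (F := fun s => pd (fun z => g z j i) s)
    (fun s => (hg j i).pd s) k p
  calc pdT (fun q => synMetric g a q (Sum.inl j) (Sum.inl i)) (Sum.inl k) p
      = pdT (fun q : TPt n => a q.1 j i) (Sum.inl k) p
        + pdT (fun q : TPt n => ∑ s, q.2 s * pd (fun z => g z j i) s q.1) (Sum.inl k) p := h1
    _ = _ := by rw [h2, h3]

theorem pdT_Gll_inr (hg : ∀ j i, Sm (fun z => g z j i)) (ha : ∀ j i, Sm (fun z => a z j i))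
    (j i k : Fin n) (p : TPt n) :
    pdT (fun q => synMetric g a q (Sum.inl j) (Sum.inl i)) (Sum.inr k) p
      = pd (fun z => g z j i) k p.1 := by
  have h1 := pdT_add (f := fun q : TPt n => a q.1 j i)
    (g := fun q : TPt n => ∑ s, q.2 s * pd (fun z => g z j i) s q.1)
    ((ha j i).fst) (Sm.sum fun s _ => (Sm.snd_apply s).mul (((hg j i).pd s).fst)) (Sum.inr k) p
  have h2 := pdT_fst_inr (ha j i) k p
  have h3 := pdT_ymul_inr (F := fun s => pd (fun z => g z j i) s)
    (fun s => (hg j i).pd s) k p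
  calc pdT (fun q => synMetric g a q (Sum.inl j) (Sum.inl i)) (Sum.inr k) p
      = pdT (fun q : TPt n => a q.1 j i) (Sum.inr k) p
        + pdT (fun q : TPt n => ∑ s, q.2 s * pd (fun z => g z j i) s q.1) (Sum.inr k) p := h1
    _ = 0 + pd (fun z => g z j i) k p.1 := by rw [h2, h3]
    _ = _ := by ring

theorem pdT_Glr_inl (hg : ∀ j i, Sm (fun z => g z j i)) (j i k : Fin n) (p : TPt n) :
    pdT (fun q => synMetric g a q (Sum.inl j) (Sum.inr i)) (Sum.inl k) p
      = pd (fun z => g z j i) k p.1 := pdT_fst_inl (hg j i) k p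

theorem pdT_Glr_inr (hg : ∀ j i, Sm (fun z => g z j i)) (j i k : Fin n) (p : TPt n) :
    pdT (fun q => synMetric g a q (Sum.inl j) (Sum.inr i)) (Sum.inr k) p = 0 :=
  pdT_fst_inr (hg j i) k p

theorem pdT_Grl_inl (hg : ∀ j i, Sm (fun z => g z j i)) (j i k : Fin n) (p : TPt n) :
    pdT (fun q => synMetric g a q (Sum.inr j) (Sum.inl i)) (Sum.inl k) p
      = pd (fun z => g z j i) k p.1 := pdT_fst_inl (hg j i) k p

theorem pdT_Grl_inr (hg : ∀ j i, Sm (fun z => g z j i)) (j i k : Fin n) (p : TPt n) :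
    pdT (fun q => synMetric g a q (Sum.inr j) (Sum.inl i)) (Sum.inr k) p = 0 :=
  pdT_fst_inr (hg j i) k p

theorem pdT_Grr (j i : Fin n) (A : Idx n) (p : TPt n) :
    pdT (fun q => synMetric g a q (Sum.inr j) (Sum.inr i)) A p = 0 := pdT_const 0 A p

-- assocCov components
theorem assoc_vlift_inl (p : TPt n) (i : Fin n) :
    assocCov g a (vlift X) p (Sum.inl i) = lower g X p.1 i := by
  unfold assocCov
  rw [Fintype.sum_sum_type]
  show (∑ h, synMetric g a p (Sum.inl i) (Sum.inl h) * 0)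
      + (∑ h, g p.1 i h * X p.1 h) = _
  simp [lower]

theorem assoc_vlift_inr (p : TPt n) (i : Fin n) :
    assocCov g a (vlift X) p (Sum.inr i) = 0 := by
  unfold assocCov
  rw [Fintype.sum_sum_type]
  show (∑ h, synMetric g a p (Sum.inr i) (Sum.inl h) * 0)
      + (∑ h, (0:ℝ) * X p.1 h) = _
  simp

theorem assoc_clift_inl (p : TPt n) (i : Fin n) :
    assocCov g a (clift X) p (Sum.inl i)
      = (∑ h, (a p.1 i h + ∑ s, p.2 s * pd (fun z => g z i h) s p.1) * X p.1 h)
        + ∑ h, g p.1 i h * ∑ s, p.2 s * pd (fun z => X z h) s p.1 := by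
  unfold assocCov
  rw [Fintype.sum_sum_type]
  rfl

theorem assoc_clift_inr (p : TPt n) (i : Fin n) :
    assocCov g a (clift X) p (Sum.inr i) = lower g X p.1 i := by
  unfold assocCov
  rw [Fintype.sum_sum_type]
  show (∑ h, g p.1 i h * X p.1 h)
      + (∑ h, (0:ℝ) * (∑ s, p.2 s * pd (fun z => X z h) s p.1)) = _
  simp [lower]

end Chunk2

section Chunk3
variable {n : ℕ} (g ginv a : (Fin n → ℝ) → Fin n → Fin n → ℝ)
variable (X : (Fin n → ℝ) → Fin n → ℝ)

theorem pd_congr {f f' : (Fin n → ℝ) → ℝ} (h : ∀ z, f z = f' z) (j : Fin n) (x : Fin n → ℝ) :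
    pd f j x = pd f' j x := by
  have : f = f' := funext h
  rw [this]

theorem sm_Christoffel (hg : ∀ j i, Sm (fun z => g z j i))
    (hginv : ∀ j i, Sm (fun z => ginv z j i)) (h j i : Fin n) :
    Sm (fun z => Christoffel g ginv h j i z) := by
  unfold Christoffel
  exact (Sm.const _).mul (Sm.sum fun s _ => (hginv h s).mul
    ((((hg s i).pd j).add ((hg j s).pd i)).sub ((hg j i).pd s)))

theorem Christoffel_symm (hg : ∀ j i, Sm (fun z => g z j i))
    (hgsymm : ∀ x j i, g x j i = g x i j) (h j i : Fin n) (x : Fin n → ℝ) :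
    Christoffel g ginv h j i x = Christoffel g ginv h i j x := by
  unfold Christoffel
  congr 1
  refine Finset.sum_congr rfl fun s _ => ?_
  rw [pd_congr (f := fun z => g z s i) (f' := fun z => g z i s) (fun z => hgsymm z s i),
    pd_congr (f := fun z => g z j s) (f' := fun z => g z s j) (fun z => hgsymm z j s),
    pd_congr (f := fun z => g z j i) (f' := fun z => g z i j) (fun z => hgsymm z j i)]
  ring

theorem pd_Christoffel (hg : ∀ j i, Sm (fun z => g z j i))
    (hginv : ∀ j i, Sm (fun z => ginv z j i)) (h j i t : Fin n) (x : Fin n → ℝ) :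
    pd (fun z => Christoffel g ginv h j i z) t x
      = (1 / 2) * ∑ s,
          (pd (fun z => ginv z h s) t x *
            (pd (fun z => g z s i) j x + pd (fun z => g z j s) i x - pd (fun z => g z j i) s x)
          + ginv x h s *
            (pd (pd (fun z => g z s i) j) t x + pd (pd (fun z => g z j s) i) t x
              - pd (pd (fun z => g z j i) s) t x)) := by
  have smP : ∀ s : Fin n, Sm (fun z => pd (fun z' => g z' s i) j z + pd (fun z' => g z' j s) i z
      - pd (fun z' => g z' j i) s z) :=
    fun s => (((hg s i).pd j).add ((hg j s).pd i)).sub ((hg j i).pd s)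
  have e0 : (fun z => Christoffel g ginv h j i z)
      = fun z => (1/2 : ℝ) * ∑ s, ginv z h s *
          (pd (fun z' => g z' s i) j z + pd (fun z' => g z' j s) i z
            - pd (fun z' => g z' j i) s z) := rfl
  rw [e0, pd_const_mul (Sm.sum fun s _ => (hginv h s).mul (smP s)),
    pd_sum (fun s _ => (hginv h s).mul (smP s))]
  congr 1
  refine Finset.sum_congr rfl fun s _ => ?_
  rw [pd_mul (hginv h s) (smP s),
    pd_sub (((hg s i).pd j).add ((hg j s).pd i)) ((hg j i).pd s),
    pd_add ((hg s i).pd j) ((hg j s).pd i)]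

theorem sm_lower (hg : ∀ j i, Sm (fun z => g z j i)) (hX : ∀ h, Sm (fun z => X z h))
    (i : Fin n) : Sm (fun z => lower g X z i) := by
  unfold lower
  exact Sm.sum fun h _ => (hg i h).mul (hX h)

theorem pd_lower (hg : ∀ j i, Sm (fun z => g z j i)) (hX : ∀ h, Sm (fun z => X z h))
    (i s : Fin n) (x : Fin n → ℝ) :
    pd (fun z => lower g X z i) s x
      = ∑ h, (pd (fun z => g z i h) s x * X x h + g x i h * pd (fun z => X z h) s x) := by
  have e0 : (fun z => lower g X z i) = fun z => ∑ h, g z i h * X z h := rfl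
  rw [e0, pd_sum (fun h _ => (hg i h).mul (hX h))]
  exact Finset.sum_congr rfl fun h _ => pd_mul (hg i h) (hX h) s x

theorem pd_covCov_lower (hg : ∀ j i, Sm (fun z => g z j i))
    (hginv : ∀ j i, Sm (fun z => ginv z j i)) (hX : ∀ h, Sm (fun z => X z h))
    (j i s : Fin n) (x : Fin n → ℝ) :
    pd (fun z => covCov g ginv (lower g X) j i z) s x
      = pd (pd (fun z => lower g X z i) j) s x
        - ∑ k, (pd (fun z => Christoffel g ginv k j i z) s x * lower g X x k
            + Christoffel g ginv k j i x * pd (fun z => lower g X z k) s x) := by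
  have e0 : (fun z => covCov g ginv (lower g X) j i z)
      = fun z => pd (fun z' => lower g X z' i) j z
          - ∑ k, Christoffel g ginv k j i z * lower g X z k := rfl
  rw [e0, pd_sub ((sm_lower g X hg hX i).pd j) (Sm.sum fun k _ =>
      (sm_Christoffel g ginv hg hginv k j i).mul (sm_lower g X hg hX k)),
    pd_sum (fun k _ => (sm_Christoffel g ginv hg hginv k j i).mul (sm_lower g X hg hX k))]
  congr 1
  exact Finset.sum_congr rfl fun k _ =>
    pd_mul (sm_Christoffel g ginv hg hginv k j i) (sm_lower g X hg hX k) s x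

theorem Hcoef_expand (hg : ∀ j i, Sm (fun z => g z j i))
    (hgsymm : ∀ x j i, g x j i = g x i j) (hasymm : ∀ x j i, a x j i = a x i j)
    (h j i : Fin n) (x : Fin n → ℝ) :
    Hcoef g ginv a h j i x
      = (1 / 2) * (∑ d, ginv x h d *
          (pd (fun z => a z d i) j x + pd (fun z => a z j d) i x - pd (fun z => a z j i) d x))
        - ∑ d, ginv x h d * (∑ l, Christoffel g ginv l j i x * a x d l) := by
  have key : ∀ d : Fin n,
      cov2 g ginv a j d i x + cov2 g ginv a i j d x - cov2 g ginv a d j i x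
        = (pd (fun z => a z d i) j x + pd (fun z => a z j d) i x - pd (fun z => a z j i) d x)
          - 2 * ∑ l, Christoffel g ginv l j i x * a x d l := by
    intro d
    unfold cov2
    have e1 : ∑ l, Christoffel g ginv l d j x * a x l i
        = ∑ l, Christoffel g ginv l j d x * a x l i :=
      Finset.sum_congr rfl fun l _ => by rw [Christoffel_symm g ginv hg hgsymm l d j]
    have e2 : ∑ l, Christoffel g ginv l d i x * a x j l
        = ∑ l, Christoffel g ginv l i d x * a x j l :=
      Finset.sum_congr rfl fun l _ => by rw [Christoffel_symm g ginv hg hgsymm l d i]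
    have e3 : ∑ l, Christoffel g ginv l i j x * a x l d
        = ∑ l, Christoffel g ginv l j i x * a x d l :=
      Finset.sum_congr rfl fun l _ => by
        rw [Christoffel_symm g ginv hg hgsymm l i j, hasymm x l d]
    rw [e1, e2, e3]
    ring
  unfold Hcoef
  rw [Finset.sum_congr rfl fun d _ => by rw [key d]]
  rw [Finset.sum_congr rfl (fun d (_ : d ∈ Finset.univ) => mul_sub (ginv x h d) _ _),
    Finset.sum_sub_distrib, mul_sub]
  congr 1
  have e4 : ∑ d : Fin n, ginv x h d * (2 * ∑ l, Christoffel g ginv l j i x * a x d l)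
      = 2 * ∑ d, ginv x h d * ∑ l, Christoffel g ginv l j i x * a x d l := by
    rw [Finset.mul_sum]
    exact Finset.sum_congr rfl fun d _ => by ring
  rw [e4]
  ring

end Chunk3

section Chunk4
variable {n : ℕ} (g ginv a : (Fin n → ℝ) → Fin n → Fin n → ℝ)

theorem CT_l_ll (hg : ∀ j i, Sm (fun z => g z j i)) (ha : ∀ j i, Sm (fun z => a z j i))
    (h j i : Fin n) (p : TPt n) :
    ChristoffelT (synMetric g a) (synMetricInv ginv a) (Sum.inl h) (Sum.inl j) (Sum.inl i) p
      = Christoffel g ginv h j i p.1 := by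
  unfold ChristoffelT
  rw [Fintype.sum_sum_type]
  simp only [synMetricInv, zero_mul]
  rw [Finset.sum_const_zero, zero_add]
  rw [Finset.sum_congr rfl fun d _ => by
    rw [pdT_Grl_inl g a hg d i j p, pdT_Glr_inl g a hg j d i p,
      pdT_Gll_inr g a hg ha j i d p]]
  rfl

theorem CT_l_lr (hg : ∀ j i, Sm (fun z => g z j i))
    (h j i : Fin n) (p : TPt n) :
    ChristoffelT (synMetric g a) (synMetricInv ginv a) (Sum.inl h) (Sum.inl j) (Sum.inr i) p
      = 0 := by
  unfold ChristoffelT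
  rw [Fintype.sum_sum_type]
  simp only [synMetricInv, pdT_Grr g a, pdT_Glr_inr g a hg, zero_mul, mul_zero,
    add_zero, sub_zero, zero_add, Finset.sum_const_zero]

theorem CT_l_rl (hg : ∀ j i, Sm (fun z => g z j i))
    (h j i : Fin n) (p : TPt n) :
    ChristoffelT (synMetric g a) (synMetricInv ginv a) (Sum.inl h) (Sum.inr j) (Sum.inl i) p
      = 0 := by
  unfold ChristoffelT
  rw [Fintype.sum_sum_type]
  simp only [synMetricInv, pdT_Grr g a, pdT_Grl_inr g a hg, zero_mul, mul_zero,
    add_zero, sub_zero, zero_add, zero_sub, neg_zero, Finset.sum_const_zero]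

theorem CT_l_rr (h j i : Fin n) (p : TPt n) :
    ChristoffelT (synMetric g a) (synMetricInv ginv a) (Sum.inl h) (Sum.inr j) (Sum.inr i) p
      = 0 := by
  unfold ChristoffelT
  rw [Fintype.sum_sum_type]
  simp only [synMetricInv, pdT_Grr g a, zero_mul, mul_zero,
    add_zero, sub_zero, zero_add, Finset.sum_const_zero]

theorem CT_r_lr (hg : ∀ j i, Sm (fun z => g z j i)) (ha : ∀ j i, Sm (fun z => a z j i))
    (h j i : Fin n) (p : TPt n) :
    ChristoffelT (synMetric g a) (synMetricInv ginv a) (Sum.inr h) (Sum.inl j) (Sum.inr i) p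
      = Christoffel g ginv h j i p.1 := by
  unfold ChristoffelT
  rw [Fintype.sum_sum_type]
  simp only [synMetricInv, pdT_Glr_inl g a hg, pdT_Gll_inr g a hg ha, pdT_Grr g a,
    pdT_Glr_inr g a hg, zero_mul, mul_zero, add_zero, sub_zero, zero_add,
    Finset.sum_const_zero]
  rfl

theorem CT_r_rl (hg : ∀ j i, Sm (fun z => g z j i)) (ha : ∀ j i, Sm (fun z => a z j i))
    (h j i : Fin n) (p : TPt n) :
    ChristoffelT (synMetric g a) (synMetricInv ginv a) (Sum.inr h) (Sum.inr j) (Sum.inl i) p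
      = Christoffel g ginv h j i p.1 := by
  unfold ChristoffelT
  rw [Fintype.sum_sum_type]
  simp only [synMetricInv, pdT_Gll_inr g a hg ha, pdT_Grl_inl g a hg, pdT_Grr g a,
    pdT_Grl_inr g a hg, zero_mul, mul_zero, add_zero, sub_zero, zero_add,
    Finset.sum_const_zero]
  rfl

theorem CT_r_rr (hg : ∀ j i, Sm (fun z => g z j i))
    (h j i : Fin n) (p : TPt n) :
    ChristoffelT (synMetric g a) (synMetricInv ginv a) (Sum.inr h) (Sum.inr j) (Sum.inr i) p
      = 0 := by
  unfold ChristoffelT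
  rw [Fintype.sum_sum_type]
  simp only [synMetricInv, pdT_Grr g a, pdT_Glr_inr g a hg, pdT_Grl_inr g a hg, zero_mul,
    mul_zero, add_zero, sub_zero, zero_add, Finset.sum_const_zero]

end Chunk4

section Chunk5
variable {n : ℕ} (g ginv a : (Fin n → ℝ) → Fin n → Fin n → ℝ)

theorem ysplit {n : ℕ} (c : ℝ) (v T1 T2 T3 : Fin n → ℝ) :
    ∑ s, v s * (c * (T1 s + T2 s - T3 s))
      = c * ((∑ s, v s * T1 s) + (∑ s, v s * T2 s) - (∑ s, v s * T3 s)) := by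
  have e : ∀ s, v s * (c * (T1 s + T2 s - T3 s))
      = c * (v s * T1 s) + c * (v s * T2 s) - c * (v s * T3 s) := fun s => by ring
  rw [Finset.sum_congr rfl fun s _ => e s, Finset.sum_sub_distrib, Finset.sum_add_distrib,
    ← Finset.mul_sum, ← Finset.mul_sum, ← Finset.mul_sum]
  ring

theorem triple_rotate' {n : ℕ} (F : Fin n → Fin n → Fin n → ℝ) :
    ∑ m : Fin n, ∑ d : Fin n, ∑ l : Fin n, F d l m
      = ∑ d : Fin n, ∑ l : Fin n, ∑ m : Fin n, F d l m := by
  rw [Finset.sum_comm]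
  exact Finset.sum_congr rfl fun d _ => Finset.sum_comm

theorem ct_core {n : ℕ} (y P dA1 dA2 dA3 GIh : Fin n → ℝ)
    (dGI A GI2 DD1 DD2 DD3 : Fin n → Fin n → ℝ) :
    (1/2 : ℝ) * ((∑ d, GIh d * (dA1 d + ∑ s, y s * DD1 d s + (dA2 d + ∑ s, y s * DD2 d s)
          - (dA3 d + ∑ s, y s * DD3 d s)))
      + ∑ d, ((∑ s, y s * dGI d s) - ∑ t, ∑ s, GIh t * A t s * GI2 s d) * P d)
    = (∑ t, y t * ((1/2 : ℝ) * ∑ s, (dGI s t * P s + GIh s * (DD1 s t + DD2 s t - DD3 s t))))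
      + ((1/2 : ℝ) * (∑ d, GIh d * (dA1 d + dA2 d - dA3 d))
        - ∑ d, GIh d * (∑ l, ((1/2 : ℝ) * ∑ m, GI2 l m * P m) * A d l)) := by
  -- LHS pieces
  have hA : (∑ d, GIh d * (dA1 d + ∑ s, y s * DD1 d s + (dA2 d + ∑ s, y s * DD2 d s)
          - (dA3 d + ∑ s, y s * DD3 d s)))
      = (∑ d, GIh d * (dA1 d + dA2 d - dA3 d))
        + ∑ d, ∑ s, y s * (GIh d * (DD1 d s + DD2 d s - DD3 d s)) := by
    rw [← Finset.sum_add_distrib]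
    refine Finset.sum_congr rfl fun d _ => ?_
    rw [ysplit (GIh d) y (DD1 d) (DD2 d) (DD3 d)]
    ring
  have hB : (∑ d, ((∑ s, y s * dGI d s) - ∑ t, ∑ s, GIh t * A t s * GI2 s d) * P d)
      = (∑ d, ∑ s, y s * (dGI d s * P d))
        - ∑ d, ∑ t, ∑ s, GIh t * A t s * GI2 s d * P d := by
    rw [← Finset.sum_sub_distrib]
    refine Finset.sum_congr rfl fun d _ => ?_
    rw [sub_mul, Finset.sum_mul, Finset.sum_mul]
    congr 1
    · exact Finset.sum_congr rfl fun s _ => by ring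
    · exact Finset.sum_congr rfl fun t _ => by rw [Finset.sum_mul]
  -- RHS pieces
  have hC : (∑ t, y t * ((1/2 : ℝ) * ∑ s, (dGI s t * P s + GIh s * (DD1 s t + DD2 s t - DD3 s t))))
      = (1/2 : ℝ) * (∑ d, ∑ s, y s * (dGI d s * P d))
        + (1/2 : ℝ) * (∑ d, ∑ s, y s * (GIh d * (DD1 d s + DD2 d s - DD3 d s))) := by
    have e1 : ∀ t, y t * ((1/2 : ℝ) * ∑ s, (dGI s t * P s + GIh s * (DD1 s t + DD2 s t - DD3 s t)))
        = (1/2 : ℝ) * (∑ s, y t * (dGI s t * P s))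
          + (1/2 : ℝ) * (∑ s, y t * (GIh s * (DD1 s t + DD2 s t - DD3 s t))) := by
      intro t
      rw [Finset.sum_add_distrib]
      rw [show (∑ s, y t * (dGI s t * P s)) = y t * ∑ s, dGI s t * P s from
        (Finset.mul_sum _ _ _).symm]
      rw [show (∑ s, y t * (GIh s * (DD1 s t + DD2 s t - DD3 s t)))
          = y t * ∑ s, GIh s * (DD1 s t + DD2 s t - DD3 s t) from (Finset.mul_sum _ _ _).symm]
      ring
    rw [Finset.sum_congr rfl fun t _ => e1 t, Finset.sum_add_distrib]
    congr 1
    · rw [← Finset.mul_sum, Finset.sum_comm]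
    · rw [← Finset.mul_sum, Finset.sum_comm]
  have hD : (∑ d, GIh d * (∑ l, ((1/2 : ℝ) * ∑ m, GI2 l m * P m) * A d l))
      = (1/2 : ℝ) * ∑ d, ∑ t, ∑ s, GIh t * A t s * GI2 s d * P d := by
    have e1 : ∀ d, GIh d * (∑ l, ((1/2 : ℝ) * ∑ m, GI2 l m * P m) * A d l)
        = ∑ l, ∑ m, (1/2 : ℝ) * (GIh d * A d l * GI2 l m * P m) := by
      intro d
      rw [Finset.mul_sum]
      refine Finset.sum_congr rfl fun l _ => ?_
      rw [show ((1/2 : ℝ) * ∑ m, GI2 l m * P m) * A d l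
          = ∑ m, ((1/2 : ℝ) * (GI2 l m * P m)) * A d l by
        rw [Finset.mul_sum, Finset.sum_mul]]
      rw [Finset.mul_sum]
      exact Finset.sum_congr rfl fun m _ => by ring
    rw [Finset.sum_congr rfl fun d _ => e1 d]
    rw [show (∑ d, ∑ l, ∑ m, (1/2 : ℝ) * (GIh d * A d l * GI2 l m * P m))
        = (1/2 : ℝ) * ∑ d, ∑ l, ∑ m, GIh d * A d l * GI2 l m * P m by
      rw [Finset.mul_sum]
      refine Finset.sum_congr rfl fun d _ => ?_
      rw [Finset.mul_sum]
      refine Finset.sum_congr rfl fun l _ => ?_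
      rw [Finset.mul_sum]]
    congr 1
    rw [← triple_rotate' (fun u v w => GIh u * A u v * GI2 v w * P w)]
  rw [hA, hB, hC, hD]
  ring


theorem CT_r_ll (hg : ∀ j i, Sm (fun z => g z j i)) (hginv : ∀ j i, Sm (fun z => ginv z j i))
    (ha : ∀ j i, Sm (fun z => a z j i))
    (hgsymm : ∀ x j i, g x j i = g x i j) (hasymm : ∀ x j i, a x j i = a x i j)
    (h j i : Fin n) (p : TPt n) :
    ChristoffelT (synMetric g a) (synMetricInv ginv a) (Sum.inr h) (Sum.inl j) (Sum.inl i) p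
      = (∑ t, p.2 t * pd (fun z => Christoffel g ginv h j i z) t p.1)
        + Hcoef g ginv a h j i p.1 := by
  unfold ChristoffelT
  rw [Fintype.sum_sum_type]
  simp only [synMetricInv, pdT_Gll_inl g a hg ha, pdT_Grl_inl g a hg, pdT_Glr_inl g a hg,
    pdT_Gll_inr g a hg ha]
  rw [Hcoef_expand g ginv a hg hgsymm hasymm h j i p.1]
  simp only [pd_Christoffel g ginv hg hginv]
  have sw1 : ∀ d : Fin n, (∑ s, p.2 s * pd (pd (fun z => g z d i) s) j p.1)
      = ∑ s, p.2 s * pd (pd (fun z => g z d i) j) s p.1 :=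
    fun d => Finset.sum_congr rfl fun s _ => by rw [pd_swap (hg d i) s j p.1]
  have sw2 : ∀ d : Fin n, (∑ s, p.2 s * pd (pd (fun z => g z j d) s) i p.1)
      = ∑ s, p.2 s * pd (pd (fun z => g z j d) i) s p.1 :=
    fun d => Finset.sum_congr rfl fun s _ => by rw [pd_swap (hg j d) s i p.1]
  have sw3 : ∀ d : Fin n, (∑ s, p.2 s * pd (pd (fun z => g z j i) s) d p.1)
      = ∑ s, p.2 s * pd (pd (fun z => g z j i) d) s p.1 :=
    fun d => Finset.sum_congr rfl fun s _ => by rw [pd_swap (hg j i) s d p.1]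
  simp only [sw1, sw2, sw3]
  exact ct_core p.2
    (fun d => pd (fun z => g z d i) j p.1 + pd (fun z => g z j d) i p.1
      - pd (fun z => g z j i) d p.1)
    (fun d => pd (fun z => a z d i) j p.1) (fun d => pd (fun z => a z j d) i p.1)
    (fun d => pd (fun z => a z j i) d p.1) (fun d => ginv p.1 h d)
    (fun d s => pd (fun z => ginv z h d) s p.1) (fun t s => a p.1 t s)
    (fun s d => ginv p.1 s d)
    (fun d s => pd (pd (fun z => g z d i) j) s p.1)
    (fun d s => pd (pd (fun z => g z j d) i) s p.1)
    (fun d s => pd (pd (fun z => g z j i) d) s p.1)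

end Chunk5

section Chunk6
variable {n : ℕ} (g ginv a : (Fin n → ℝ) → Fin n → Fin n → ℝ)
variable (X : (Fin n → ℝ) → Fin n → ℝ)

theorem assoc_reshape (aI XV gI y : Fin n → ℝ) (dg dX : Fin n → Fin n → ℝ) :
    ((∑ h, (aI h + ∑ s, y s * dg h s) * XV h) + ∑ h, gI h * ∑ s, y s * dX h s)
      = (∑ l, aI l * XV l) + ∑ s, y s * ∑ h, (dg h s * XV h + gI h * dX h s) := by
  have e1 : ∀ h, (aI h + ∑ s, y s * dg h s) * XV h
      = aI h * XV h + ∑ s, y s * (dg h s * XV h) := by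
    intro h
    rw [add_mul, Finset.sum_mul]
    congr 1
    exact Finset.sum_congr rfl fun s _ => by ring
  have e2 : ∀ h, gI h * ∑ s, y s * dX h s = ∑ s, y s * (gI h * dX h s) := by
    intro h
    rw [Finset.mul_sum]
    exact Finset.sum_congr rfl fun s _ => by ring
  have e4 : (∑ s, y s * ∑ h, (dg h s * XV h + gI h * dX h s))
      = (∑ h, ∑ s, y s * (dg h s * XV h)) + ∑ h, ∑ s, y s * (gI h * dX h s) := by
    have e5 : ∀ s, y s * ∑ h, (dg h s * XV h + gI h * dX h s)
        = (∑ h, y s * (dg h s * XV h)) + ∑ h, y s * (gI h * dX h s) := by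
      intro s
      rw [Finset.mul_sum, ← Finset.sum_add_distrib]
      exact Finset.sum_congr rfl fun h _ => by ring
    rw [Finset.sum_congr rfl fun s _ => e5 s, Finset.sum_add_distrib]
    exact congrArg₂ (· + ·) Finset.sum_comm Finset.sum_comm
  rw [Finset.sum_congr rfl fun h _ => e1 h, Finset.sum_congr rfl fun h _ => e2 h,
    Finset.sum_add_distrib, e4]
  ring

theorem assoc_clift_inl' (hg : ∀ j i, Sm (fun z => g z j i)) (hX : ∀ h, Sm (fun z => X z h))
    (p : TPt n) (i : Fin n) :
    assocCov g a (clift X) p (Sum.inl i)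
      = (∑ l, a p.1 i l * X p.1 l)
        + ∑ s, p.2 s * pd (fun z => lower g X z i) s p.1 := by
  rw [assoc_clift_inl g a X p i,
    assoc_reshape (fun h => a p.1 i h) (fun h => X p.1 h) (fun h => g p.1 i h) p.2
      (fun h s => pd (fun z => g z i h) s p.1) (fun h s => pd (fun z => X z h) s p.1)]
  congr 1
  exact Finset.sum_congr rfl fun s _ => by rw [pd_lower g X hg hX i s p.1]

-- vertical lift parts
theorem part1 (hg : ∀ j i, Sm (fun z => g z j i)) (hginv : ∀ j i, Sm (fun z => ginv z j i))
    (ha : ∀ j i, Sm (fun z => a z j i)) (hX : ∀ h, Sm (fun z => X z h))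
    (hgsymm : ∀ x j i, g x j i = g x i j) (hasymm : ∀ x j i, a x j i = a x i j)
    (p : TPt n) (j i : Fin n) :
    covCovT (synMetric g a) (synMetricInv ginv a) (assocCov g a (vlift X))
        (Sum.inl j) (Sum.inl i) p = covCov g ginv (lower g X) j i p.1 := by
  unfold covCovT
  rw [show (fun q => assocCov g a (vlift X) q (Sum.inl i))
      = (fun q : TPt n => lower g X q.1 i) from funext fun q => assoc_vlift_inl g a X q i]
  rw [pdT_fst_inl (sm_lower g X hg hX i), Fintype.sum_sum_type]
  simp only [CT_l_ll g ginv a hg ha, CT_r_ll g ginv a hg hginv ha hgsymm hasymm,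
    assoc_vlift_inl g a X p, assoc_vlift_inr g a X p, mul_zero, Finset.sum_const_zero,
    add_zero]
  rfl

theorem part2 (hg : ∀ j i, Sm (fun z => g z j i)) (ha : ∀ j i, Sm (fun z => a z j i))
    (p : TPt n) (j i : Fin n) :
    covCovT (synMetric g a) (synMetricInv ginv a) (assocCov g a (vlift X))
        (Sum.inl j) (Sum.inr i) p = 0 := by
  unfold covCovT
  rw [show (fun q => assocCov g a (vlift X) q (Sum.inr i))
      = (fun _ : TPt n => (0:ℝ)) from funext fun q => assoc_vlift_inr g a X q i]
  rw [pdT_const, Fintype.sum_sum_type]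
  simp only [CT_l_lr g ginv a hg, CT_r_lr g ginv a hg ha,
    assoc_vlift_inl g a X p, assoc_vlift_inr g a X p, mul_zero, zero_mul,
    Finset.sum_const_zero, add_zero]
  ring

theorem part3 (hg : ∀ j i, Sm (fun z => g z j i)) (ha : ∀ j i, Sm (fun z => a z j i))
    (hX : ∀ h, Sm (fun z => X z h)) (p : TPt n) (j i : Fin n) :
    covCovT (synMetric g a) (synMetricInv ginv a) (assocCov g a (vlift X))
        (Sum.inr j) (Sum.inl i) p = 0 := by
  unfold covCovT
  rw [show (fun q => assocCov g a (vlift X) q (Sum.inl i))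
      = (fun q : TPt n => lower g X q.1 i) from funext fun q => assoc_vlift_inl g a X q i]
  rw [pdT_fst_inr (sm_lower g X hg hX i), Fintype.sum_sum_type]
  simp only [CT_l_rl g ginv a hg, CT_r_rl g ginv a hg ha,
    assoc_vlift_inl g a X p, assoc_vlift_inr g a X p, mul_zero, zero_mul,
    Finset.sum_const_zero, add_zero]
  ring

theorem part4 (hg : ∀ j i, Sm (fun z => g z j i)) (p : TPt n) (j i : Fin n) :
    covCovT (synMetric g a) (synMetricInv ginv a) (assocCov g a (vlift X))
        (Sum.inr j) (Sum.inr i) p = 0 := by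
  unfold covCovT
  rw [show (fun q => assocCov g a (vlift X) q (Sum.inr i))
      = (fun _ : TPt n => (0:ℝ)) from funext fun q => assoc_vlift_inr g a X q i]
  rw [pdT_const, Fintype.sum_sum_type]
  simp only [CT_l_rr g ginv a, CT_r_rr g ginv a hg, mul_zero, zero_mul,
    Finset.sum_const_zero, add_zero]
  ring

theorem part6 (hg : ∀ j i, Sm (fun z => g z j i)) (ha : ∀ j i, Sm (fun z => a z j i))
    (hX : ∀ h, Sm (fun z => X z h)) (p : TPt n) (j i : Fin n) :
    covCovT (synMetric g a) (synMetricInv ginv a) (assocCov g a (clift X))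
        (Sum.inl j) (Sum.inr i) p = covCov g ginv (lower g X) j i p.1 := by
  unfold covCovT
  rw [show (fun q => assocCov g a (clift X) q (Sum.inr i))
      = (fun q : TPt n => lower g X q.1 i) from funext fun q => assoc_clift_inr g a X q i]
  rw [pdT_fst_inl (sm_lower g X hg hX i), Fintype.sum_sum_type]
  simp only [CT_l_lr g ginv a hg, CT_r_lr g ginv a hg ha,
    assoc_clift_inr g a X p, zero_mul, Finset.sum_const_zero, zero_add]
  rfl

theorem part7 (hg : ∀ j i, Sm (fun z => g z j i)) (ha : ∀ j i, Sm (fun z => a z j i))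
    (hX : ∀ h, Sm (fun z => X z h)) (p : TPt n) (j i : Fin n) :
    covCovT (synMetric g a) (synMetricInv ginv a) (assocCov g a (clift X))
        (Sum.inr j) (Sum.inl i) p = covCov g ginv (lower g X) j i p.1 := by
  unfold covCovT
  rw [show (fun q => assocCov g a (clift X) q (Sum.inl i))
      = (fun q : TPt n => (∑ l, a q.1 i l * X q.1 l)
          + ∑ s, q.2 s * pd (fun z => lower g X z i) s q.1) from
      funext fun q => assoc_clift_inl' g a X hg hX q i]
  rw [pdT_add (Sm.sum fun l _ => ((ha i l).mul (hX l)).fst)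
      (Sm.sum fun s _ => (Sm.snd_apply s).mul (((sm_lower g X hg hX i).pd s).fst)),
    pdT_fst_inr (Sm.sum fun l _ => (ha i l).mul (hX l)),
    pdT_ymul_inr (F := fun s => pd (fun z => lower g X z i) s)
      (fun s => (sm_lower g X hg hX i).pd s), Fintype.sum_sum_type]
  simp only [CT_l_rl g ginv a hg, CT_r_rl g ginv a hg ha,
    assoc_clift_inr g a X p, zero_mul, Finset.sum_const_zero, zero_add]
  rfl

theorem part8 (hg : ∀ j i, Sm (fun z => g z j i)) (hX : ∀ h, Sm (fun z => X z h))
    (p : TPt n) (j i : Fin n) :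
    covCovT (synMetric g a) (synMetricInv ginv a) (assocCov g a (clift X))
        (Sum.inr j) (Sum.inr i) p = 0 := by
  unfold covCovT
  rw [show (fun q => assocCov g a (clift X) q (Sum.inr i))
      = (fun q : TPt n => lower g X q.1 i) from funext fun q => assoc_clift_inr g a X q i]
  rw [pdT_fst_inr (sm_lower g X hg hX i), Fintype.sum_sum_type]
  simp only [CT_l_rr g ginv a, CT_r_rr g ginv a hg, mul_zero, zero_mul,
    Finset.sum_const_zero, add_zero]
  ring

end Chunk6

section Chunk7

theorem cc_core {n : ℕ} (dAX : ℝ) (y L AX Γ H ddL : Fin n → ℝ) (dΓ dL : Fin n → Fin n → ℝ) :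
    dAX + ∑ s, y s * ddL s
      - (∑ m, Γ m * (AX m + ∑ s, y s * dL m s) + ∑ m, ((∑ t, y t * dΓ m t) + H m) * L m)
    = (∑ s, y s * (ddL s - ∑ k, (dΓ k s * L k + Γ k * dL k s)))
      + (dAX - ∑ k, Γ k * AX k) - ∑ m, H m * L m := by
  have h1 : ∑ m, Γ m * (AX m + ∑ s, y s * dL m s)
      = (∑ m, Γ m * AX m) + ∑ m, ∑ s, y s * (Γ m * dL m s) := by
    rw [← Finset.sum_add_distrib]
    refine Finset.sum_congr rfl fun m _ => ?_
    rw [mul_add, Finset.mul_sum]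
    congr 1
    exact Finset.sum_congr rfl fun s _ => by ring
  have h2 : ∑ m, ((∑ t, y t * dΓ m t) + H m) * L m
      = (∑ m, ∑ t, y t * (dΓ m t * L m)) + ∑ m, H m * L m := by
    rw [← Finset.sum_add_distrib]
    refine Finset.sum_congr rfl fun m _ => ?_
    rw [add_mul, Finset.sum_mul]
    congr 1
    exact Finset.sum_congr rfl fun t _ => by ring
  have h3 : ∑ s, y s * (ddL s - ∑ k, (dΓ k s * L k + Γ k * dL k s))
      = (∑ s, y s * ddL s)
        - ((∑ s, ∑ k, y s * (dΓ k s * L k)) + ∑ s, ∑ k, y s * (Γ k * dL k s)) := by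
    have e : ∀ s, y s * (ddL s - ∑ k, (dΓ k s * L k + Γ k * dL k s))
        = y s * ddL s - ((∑ k, y s * (dΓ k s * L k)) + ∑ k, y s * (Γ k * dL k s)) := by
      intro s
      rw [Finset.sum_add_distrib, mul_sub, mul_add, Finset.mul_sum, Finset.mul_sum]
    rw [Finset.sum_congr rfl fun s _ => e s, Finset.sum_sub_distrib, Finset.sum_add_distrib]
  have h4 : ∑ m, ∑ s, y s * (Γ m * dL m s) = ∑ s, ∑ m, y s * (Γ m * dL m s) :=
    Finset.sum_comm
  have h5 : ∑ m, ∑ t, y t * (dΓ m t * L m) = ∑ t, ∑ m, y t * (dΓ m t * L m) :=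
    Finset.sum_comm
  rw [h1, h2, h3, h4, h5]
  ring

variable {n : ℕ} (g ginv a : (Fin n → ℝ) → Fin n → Fin n → ℝ)
variable (X : (Fin n → ℝ) → Fin n → ℝ)

theorem part5 (hg : ∀ j i, Sm (fun z => g z j i)) (hginv : ∀ j i, Sm (fun z => ginv z j i))
    (ha : ∀ j i, Sm (fun z => a z j i)) (hX : ∀ h, Sm (fun z => X z h))
    (hgsymm : ∀ x j i, g x j i = g x i j) (hasymm : ∀ x j i, a x j i = a x i j)
    (p : TPt n) (j i : Fin n) :
    covCovT (synMetric g a) (synMetricInv ginv a) (assocCov g a (clift X))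
        (Sum.inl j) (Sum.inl i) p
      = (∑ s, p.2 s * pd (fun z => covCov g ginv (lower g X) j i z) s p.1)
        + covCov g ginv (fun z i' => ∑ l, a z i' l * X z l) j i p.1
        - ∑ m, Hcoef g ginv a m j i p.1 * lower g X p.1 m := by
  unfold covCovT
  rw [show (fun q => assocCov g a (clift X) q (Sum.inl i))
      = (fun q : TPt n => (∑ l, a q.1 i l * X q.1 l)
          + ∑ s, q.2 s * pd (fun z => lower g X z i) s q.1) from
      funext fun q => assoc_clift_inl' g a X hg hX q i]
  rw [pdT_add (Sm.sum fun l _ => ((ha i l).mul (hX l)).fst)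
      (Sm.sum fun s _ => (Sm.snd_apply s).mul (((sm_lower g X hg hX i).pd s).fst)),
    pdT_fst_inl (Sm.sum fun l _ => (ha i l).mul (hX l)),
    pdT_ymul_inl (F := fun s => pd (fun z => lower g X z i) s)
      (fun s => (sm_lower g X hg hX i).pd s), Fintype.sum_sum_type]
  simp only [CT_l_ll g ginv a hg ha, CT_r_ll g ginv a hg hginv ha hgsymm hasymm,
    assoc_clift_inl' g a X hg hX p, assoc_clift_inr g a X p]
  simp only [pd_covCov_lower g ginv X hg hginv hX]
  have sw : (∑ s, p.2 s * pd (pd (fun z => lower g X z i) s) j p.1)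
      = ∑ s, p.2 s * pd (pd (fun z => lower g X z i) j) s p.1 :=
    Finset.sum_congr rfl fun s _ => by rw [pd_swap (sm_lower g X hg hX i) s j p.1]
  rw [sw]
  exact cc_core (pd (fun x => ∑ l, a x i l * X x l) j p.1) p.2
    (fun m => lower g X p.1 m) (fun m => ∑ l, a p.1 m l * X p.1 l)
    (fun m => Christoffel g ginv m j i p.1) (fun m => Hcoef g ginv a m j i p.1)
    (fun s => pd (pd (fun z => lower g X z i) j) s p.1)
    (fun m t => pd (fun z => Christoffel g ginv m j i z) t p.1)
    (fun m s => pd (fun z => lower g X z m) s p.1)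

end Chunk7

end Aux

/-- Components of the covariant derivative (w.r.t. the Levi-Civita
connection `^S∇` of the synectic metric) of the associated covector fields of the vertical
and complete lifts of `X`. -/
theorem cov_deriv_assoc_covectors {n : ℕ}
    (g ginv a : (Fin n → ℝ) → Fin n → Fin n → ℝ)
    (X : (Fin n → ℝ) → Fin n → ℝ)
    (hg : ∀ j i, ContDiff ℝ (⊤ : ℕ∞) fun z => g z j i)
    (hgsymm : ∀ x j i, g x j i = g x i j)
    (hpos : ∀ (x v : Fin n → ℝ), v ≠ 0 → 0 < ∑ j, ∑ i, g x j i * v j * v i)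
    (hginv : ∀ j i, ContDiff ℝ (⊤ : ℕ∞) fun z => ginv z j i)
    (hinv : ∀ x j k, ∑ i, g x j i * ginv x i k = if j = k then (1 : ℝ) else 0)
    (ha : ∀ j i, ContDiff ℝ (⊤ : ℕ∞) fun z => a z j i)
    (hasymm : ∀ x j i, a x j i = a x i j)
    (hX : ∀ h, ContDiff ℝ (⊤ : ℕ∞) fun z => X z h)
    : ∀ (p : TPt n) (j i : Fin n),
      covCovT (synMetric g a) (synMetricInv ginv a) (assocCov g a (vlift X))
          (Sum.inl j) (Sum.inl i) p = covCov g ginv (lower g X) j i p.1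
      ∧ covCovT (synMetric g a) (synMetricInv ginv a) (assocCov g a (vlift X))
          (Sum.inl j) (Sum.inr i) p = 0
      ∧ covCovT (synMetric g a) (synMetricInv ginv a) (assocCov g a (vlift X))
          (Sum.inr j) (Sum.inl i) p = 0
      ∧ covCovT (synMetric g a) (synMetricInv ginv a) (assocCov g a (vlift X))
          (Sum.inr j) (Sum.inr i) p = 0
      ∧ covCovT (synMetric g a) (synMetricInv ginv a) (assocCov g a (clift X))
          (Sum.inl j) (Sum.inl i) p
        = (∑ s, p.2 s * pd (fun z => covCov g ginv (lower g X) j i z) s p.1)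
          + covCov g ginv (fun z i' => ∑ l, a z i' l * X z l) j i p.1
          - ∑ m, Hcoef g ginv a m j i p.1 * lower g X p.1 m
      ∧ covCovT (synMetric g a) (synMetricInv ginv a) (assocCov g a (clift X))
          (Sum.inl j) (Sum.inr i) p = covCov g ginv (lower g X) j i p.1
      ∧ covCovT (synMetric g a) (synMetricInv ginv a) (assocCov g a (clift X))
          (Sum.inr j) (Sum.inl i) p = covCov g ginv (lower g X) j i p.1
      ∧ covCovT (synMetric g a) (synMetricInv ginv a) (assocCov g a (clift X))
          (Sum.inr j) (Sum.inr i) p = 0 := by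
  intro p j i
  exact ⟨part1 g ginv a X hg hginv ha hX hgsymm hasymm p j i,
    part2 g ginv a X hg ha p j i,
    part3 g ginv a X hg ha hX p j i,
    part4 g ginv a X hg p j i,
    part5 g ginv a X hg hginv ha hX hgsymm hasymm p j i,
    part6 g ginv a X hg ha hX p j i,
    part7 g ginv a X hg ha hX p j i,
    part8 g ginv a X hg hX p j i⟩

end Synectic
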